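/- arXiv:1511.05976 — 4 statements merged into one kernel-verified Lean document; each statement's English description precedes it below -/
import Mathlib

section
/- Let A be a finite-dimensional hereditary algebra over an algebraically closed field K. A sequence (X_1, ..., X_t) of A-modules is an exceptional sequence if and only if the completely ordered set X = {X_1, ..., X_t} is a stratifying system over A. -/
open CategoryTheory CategoryTheory.Limits

/-- All `A`-module homomorphisms from `X` to `Y` vanish, i.e. `Hom_A(X, Y) = 0`. -/
def homZero {A : Type} [Ring A] (X Y : ModuleCat.{0} A) : Prop := ∀ f : X ⟶ Y, f = 0

/-- `Ext¹_A(X, Y) = 0`, phrased as: every short exact sequence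
`0 ⟶ Y ⟶ E ⟶ X ⟶ 0` splits. -/
def ext1Zero {A : Type} [Ring A] (X Y : ModuleCat.{0} A) : Prop :=
  ∀ (E : ModuleCat.{0} A) (i : Y ⟶ E) (pr : E ⟶ X) (w : i ≫ pr = 0),
    (ShortComplex.mk i pr w).ShortExact → ∃ r : E ⟶ Y, i ≫ r = 𝟙 Y

/-- An `A`-module is indecomposable: it is nonzero, and in any biproduct
decomposition one of the summands vanishes. -/
def Indec {A : Type} [Ring A] (M : ModuleCat.{0} A) : Prop :=
  ¬ IsZero M ∧ ∀ N₁ N₂ : ModuleCat.{0} A, Nonempty (M ≅ N₁ ⊞ N₂) → IsZero N₁ ∨ IsZero N₂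

/-- Two sets of modules coincide up to isomorphism. -/
def SetIso {A : Type} [Ring A] (S₁ S₂ : Set (ModuleCat.{0} A)) : Prop :=
  (∀ X ∈ S₁, ∃ Y ∈ S₂, Nonempty (X ≅ Y)) ∧ ∀ Y ∈ S₂, ∃ X ∈ S₁, Nonempty (X ≅ Y)

/-- `0 ⟶ L ⟶ E ⟶ M ⟶ 0` (with maps `i`, `p`) is an almost split
(Auslander–Reiten) sequence: it is a non-split short exact sequence with
indecomposable end terms, every map `N ⟶ M` which is not a split epimorphism
factors through `p`, and every map `L ⟶ N` which is not a split monomorphism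
factors through `i`. -/
structure IsAlmostSplitSeq {A : Type} [Ring A] {L E M : ModuleCat.{0} A}
    (i : L ⟶ E) (p : E ⟶ M) : Prop where
  comp_zero : i ≫ p = 0
  shortExact : (ShortComplex.mk i p comp_zero).ShortExact
  not_split : ¬ ∃ s : M ⟶ E, s ≫ p = 𝟙 M
  indec_left : Indec L
  indec_right : Indec M
  lift_of_not_splitEpi : ∀ (N : ModuleCat.{0} A) (f : N ⟶ M),
    (¬ ∃ s : M ⟶ N, s ≫ f = 𝟙 M) → ∃ g : N ⟶ E, g ≫ p = f
  desc_of_not_splitMono : ∀ (N : ModuleCat.{0} A) (f : L ⟶ N),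
    (¬ ∃ r : N ⟶ L, f ≫ r = 𝟙 L) → ∃ g : E ⟶ N, i ≫ g = f

/-- `f : X ⟶ Y` is an irreducible morphism: it is neither a split monomorphism
nor a split epimorphism, and in any factorisation `f = g ≫ h` either `g` is a
split monomorphism or `h` is a split epimorphism. -/
def IrreducibleHom {A : Type} [Ring A] {X Y : ModuleCat.{0} A} (f : X ⟶ Y) : Prop :=
  (¬ ∃ r : Y ⟶ X, f ≫ r = 𝟙 X) ∧ (¬ ∃ s : Y ⟶ X, s ≫ f = 𝟙 Y) ∧
  ∀ (Z : ModuleCat.{0} A) (g : X ⟶ Z) (h : Z ⟶ Y), f = g ≫ h →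
    (∃ r : Z ⟶ X, g ≫ r = 𝟙 X) ∨ (∃ s : Y ⟶ Z, s ≫ h = 𝟙 Y)

/-- One step in the Auslander–Reiten quiver: either an isomorphism, or an
irreducible morphism between indecomposable modules. -/
def IrredStep {A : Type} [Ring A] (X Y : ModuleCat.{0} A) : Prop :=
  Nonempty (X ≅ Y) ∨ (Indec X ∧ Indec Y ∧ ∃ f : X ⟶ Y, IrreducibleHom f)

/-- `Y` is a successor of `X` in the Auslander–Reiten quiver: there is a (possibly
empty) path of irreducible morphisms between indecomposable modules from `X` to `Y`. -/
def IsSuccessor {A : Type} [Ring A] (X Y : ModuleCat.{0} A) : Prop :=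
  Relation.ReflTransGen IrredStep X Y

/-- The completely ordered family of modules `L = (X_1, …, X_t)` is a
stratifying system: each `X_i` is indecomposable, `Hom(X_j, X_i) = 0` for
`j > i` and `Ext¹(X_j, X_i) = 0` for `j ≥ i`. -/
def IsStratifyingSystem {A : Type} [Ring A] (L : List (ModuleCat.{0} A)) : Prop :=
  (∀ M ∈ L, Indec M) ∧
  (∀ i j : Fin L.length, i < j → homZero (L.get j) (L.get i)) ∧
  ∀ i j : Fin L.length, i ≤ j → ext1Zero (L.get j) (L.get i)

/-- The sequence `L = (X_1, …, X_t)` is an exceptional sequence: each `X_i` is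
exceptional (`End(X_i) ≅ K` and `Ext¹(X_i, X_i) = 0`), `Hom(X_i, X_j) = 0` for
`i > j` and `Ext¹(X_i, X_j) = 0` for `i ≥ j`. -/
def IsExceptionalSeq (K : Type) [Field K] {A : Type} [Ring A] [Algebra K A]
    (L : List (ModuleCat.{0} A)) : Prop :=
  (∀ M ∈ L, Nonempty ((End M) ≃ₐ[K] K) ∧ ext1Zero M M) ∧
  (∀ i j : Fin L.length, j < i → homZero (L.get i) (L.get j)) ∧
  ∀ i j : Fin L.length, j ≤ i → ext1Zero (L.get i) (L.get j)

/-- The arrow relation of the canonically oriented Euclidean quiver `Ã_{p,q}`: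
vertices `0, 1, …, p+q-1`, counterclockwise arrows `1 → 0, 2 → 1, …,
p-1 → p-2, p+q-1 → p-1` and clockwise arrows `p → 0, p+1 → p, …,
p+q-1 → p+q-2`.  `apqArrow p q a b` holds iff there is an arrow `a → b`. -/
def apqArrow (p q : ℕ) (a b : ℕ) : Prop :=
  (1 ≤ a ∧ a ≤ p - 1 ∧ b = a - 1) ∨
  (a = p + q - 1 ∧ b = p - 1) ∨
  (a = p ∧ b = 0) ∨
  (p + 1 ≤ a ∧ a ≤ p + q - 1 ∧ b = a - 1)

/-- The data of the hereditary path algebra `A = KÃ_{p,q}` of the canonically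
oriented Euclidean quiver `Ã_{p,q}`: a finite-dimensional hereditary `K`-algebra
together with a complete irredundant family `S v` (`v < p + q`) of simple
modules such that `Ext¹(S a, S b) ≠ 0` exactly when there is an arrow `a → b`
in `Ã_{p,q}` (this pins down the quiver of `A`, hence pins down `A` up to Morita
equivalence), and the indecomposable projective covers `P v` and injective
envelopes `I v` of the simple modules. -/
structure APQAlgebra (K : Type) [Field K] (p q : ℕ) where
  A : Type
  [ringA : Ring A]
  [algebraA : Algebra K A]
  findim : FiniteDimensional K A
  hereditary : ∀ J : Ideal A, Module.Projective A J
  S : ℕ → ModuleCat.{0} A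
  P : ℕ → ModuleCat.{0} A
  I : ℕ → ModuleCat.{0} A
  S_simple : ∀ v < p + q, IsSimpleModule A (S v)
  S_pairwise_noniso : ∀ v < p + q, ∀ w < p + q, Nonempty (S v ≅ S w) → v = w
  S_complete : ∀ M : ModuleCat.{0} A, IsSimpleModule A M → ∃ v < p + q, Nonempty (M ≅ S v)
  ext_simples : ∀ a < p + q, ∀ b < p + q, (¬ ext1Zero (S a) (S b) ↔ apqArrow p q a b)
  P_projective : ∀ v < p + q, Projective (P v)
  P_indec : ∀ v < p + q, Indec (P v)
  P_cover : ∀ v < p + q, ∃ f : P v ⟶ S v, Epi f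
  I_injective : ∀ v < p + q, Injective (I v)
  I_indec : ∀ v < p + q, Indec (I v)
  I_env : ∀ v < p + q, ∃ f : S v ⟶ I v, Mono f

attribute [instance] APQAlgebra.ringA APQAlgebra.algebraA

/-- The Auslander–Reiten translation `τ` and its inverse `τi = τ⁻` of a
finite-dimensional algebra, characterised by: `τ` vanishes on projectives,
`τi` vanishes on injectives, for an indecomposable non-projective `X` there is
an almost split sequence `0 ⟶ τX ⟶ E ⟶ X ⟶ 0`, and for an indecomposable
non-injective `X` there is an almost split sequence `0 ⟶ X ⟶ E ⟶ τ⁻X ⟶ 0`. -/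
structure ARTranslation (A : Type) [Ring A] where
  τ : ModuleCat.{0} A → ModuleCat.{0} A
  τi : ModuleCat.{0} A → ModuleCat.{0} A
  τ_proj : ∀ X, Projective X → IsZero (τ X)
  τ_almost_split : ∀ X, Indec X → ¬ Projective X →
    ∃ (E : ModuleCat.{0} A) (i : τ X ⟶ E) (pr : E ⟶ X), IsAlmostSplitSeq i pr
  τi_inj : ∀ X, Injective X → IsZero (τi X)
  τi_almost_split : ∀ X, Indec X → ¬ Injective X →
    ∃ (E : ModuleCat.{0} A) (i : X ⟶ E) (pr : E ⟶ τi X), IsAlmostSplitSeq i pr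

namespace APQAlgebra

variable {K : Type} [Field K] {p q : ℕ}

/-- The list `F = (F_1, …, F_{p-1})`, where `F_i = E_{p-i}^{(∞)} = S_{p-i}`. -/
def Flist (T : APQAlgebra K p q) : List (ModuleCat.{0} T.A) :=
  (List.range (p - 1)).map fun i => T.S (p - 1 - i)

/-- The list `G = (G_1, …, G_{q-1})`, where `G_j = E_{q-j}^{(0)} = S_{p+q-j-1}`. -/
def Glist (T : APQAlgebra K p q) : List (ModuleCat.{0} T.A) :=
  (List.range (q - 1)).map fun j => T.S (p + q - 2 - j)

/-- The set `F = {F_1, …, F_{p-1}}`, where `F_i = E_{p-i}^{(∞)} = S_{p-i}`. -/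
def Fset (T : APQAlgebra K p q) : Set (ModuleCat.{0} T.A) :=
  {M | ∃ i, 1 ≤ i ∧ i ≤ p - 1 ∧ M = T.S (p - i)}

/-- The set `G = {G_1, …, G_{q-1}}`, where `G_j = E_{q-j}^{(0)} = S_{p+q-j-1}`. -/
def Gset (T : APQAlgebra K p q) : Set (ModuleCat.{0} T.A) :=
  {M | ∃ j, 1 ≤ j ∧ j ≤ q - 1 ∧ M = T.S (p + q - j - 1)}

/-- The simple regular module `E_p^{(∞)}`; it satisfies `E_p^{(∞)} = τ E_1^{(∞)} = τ S_1`. -/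
def Epinf (T : APQAlgebra K p q) (tr : ARTranslation T.A) : ModuleCat.{0} T.A :=
  tr.τ (T.S 1)

/-- The simple regular module `E_q^{(0)}`; it satisfies `E_q^{(0)} = τ E_1^{(0)} = τ S_p`. -/
def E0q (T : APQAlgebra K p q) (tr : ARTranslation T.A) : ModuleCat.{0} T.A :=
  tr.τ (T.S p)

/-- A module is postprojective if it is isomorphic to some `τ⁻ᵗ P_v`. -/
def Postprojective (T : APQAlgebra K p q) (tr : ARTranslation T.A)
    (X : ModuleCat.{0} T.A) : Prop :=
  ∃ t v, v < p + q ∧ Nonempty (X ≅ tr.τi^[t] (T.P v))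

/-- A module is preinjective if it is isomorphic to some `τᵗ I_v`. -/
def Preinjective (T : APQAlgebra K p q) (tr : ARTranslation T.A)
    (X : ModuleCat.{0} T.A) : Prop :=
  ∃ t v, v < p + q ∧ Nonempty (X ≅ tr.τ^[t] (T.I v))

/-- An indecomposable module is regular if it is neither postprojective nor
preinjective. -/
def RegularM (T : APQAlgebra K p q) (tr : ARTranslation T.A)
    (X : ModuleCat.{0} T.A) : Prop :=
  Indec X ∧ ¬ T.Postprojective tr X ∧ ¬ T.Preinjective tr X

/-- The support of a module `M`: the set of vertices `v` such that the simple
`S v` occurs as a composition factor of `M`; equivalently (over the path algebra)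
`Hom(P_v, M) ≠ 0`. -/
def suppOf (T : APQAlgebra K p q) (M : ModuleCat.{0} T.A) : Set ℕ :=
  {v | v < p + q ∧ ¬ homZero (T.P v) M}

/-- The support of a set of modules. -/
def SuppSet (T : APQAlgebra K p q) (X : Set (ModuleCat.{0} T.A)) : Set ℕ :=
  {v | ∃ M ∈ X, v ∈ T.suppOf M}

/-- A module is sincere if every simple module occurs among its composition factors. -/
def Sincere (T : APQAlgebra K p q) (M : ModuleCat.{0} T.A) : Prop :=
  ∀ v < p + q, v ∈ T.suppOf M

end APQAlgebra

/-!
An exceptional module is indecomposable, since its endomorphism ring `K` has no idempotents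
other than `0` and `1`. Conversely, let `M` be indecomposable with `Ext¹(M, M) = 0`. By the
Happel–Ringel lemma every nonzero endomorphism of `M` is injective or surjective, hence bijective,
so `End(M)` is a division algebra, finite-dimensional over the algebraically closed field `K`;
an eigenvalue of an endomorphism `φ` then gives `c : K` with `φ - c` not bijective, i.e. `φ = c`.

Happel–Ringel: let `f : X ⟶ Y` with `X`, `Y` indecomposable and `Ext¹(Y, X) = 0`. Heredity
and the vanishing of `Ext¹(Y, X)` produce an endomorphism `s` of `Y` with `s ≡ 1` modulo `f X`
whose restriction to `f X` factors through `f`. By Fitting's lemma `s` is nilpotent, whence `f X = Y`,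
or an automorphism, whence `f X` is (via `f`) a direct summand of `X`, so `f` is injective or zero.
-/

section

variable {A : Type} [Ring A]

open LinearMap

theorem LinearMap.exists_comp_eq_of_ker_le {M N P : Type} [AddCommGroup M] [Module A M]
    [AddCommGroup N] [Module A N] [AddCommGroup P] [Module A P] {π : M →ₗ[A] N}
    (hπ : Function.Surjective π) {φ : M →ₗ[A] P} (h : ker π ≤ ker φ) :
    ∃ s : N →ₗ[A] P, s ∘ₗ π = φ :=
  ⟨(ker π).liftQ φ h ∘ₗ (π.quotKerEquivOfSurjective hπ).symm.toLinearMap, by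
    ext x
    simp⟩

theorem Module.Projective.of_ker_of_range {N P : Type} [AddCommGroup N] [Module A N]
    [AddCommGroup P] [Module A P] (ρ : N →ₗ[A] P) [Module.Projective A (ker ρ)]
    [Module.Projective A (range ρ)] : Module.Projective A N := by
  obtain ⟨s, hs⟩ := ρ.rangeRestrict.exists_rightInverse_of_surjective (range_rangeRestrict ρ)
  have hs' (x : N) : ρ (s (ρ.rangeRestrict x)) = ρ x :=
    congrArg Subtype.val (LinearMap.congr_fun hs (ρ.rangeRestrict x))
  have hk (x : N) : (LinearMap.id - s ∘ₗ ρ.rangeRestrict : N →ₗ[A] N) x ∈ ker ρ := by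
    simp [hs']
  refine Module.Projective.of_split (M := ker ρ × range ρ)
    ((codRestrict _ _ hk).prod ρ.rangeRestrict) ((ker ρ).subtype.coprod s) ?_
  ext x
  simp

theorem projective_of_submodule_pi (hered : ∀ J : Ideal A, Module.Projective A J) :
    ∀ (n : ℕ) (N : Submodule A (Fin n → A)), Module.Projective A N
  | 0, N => ⟨0, fun x => Subsingleton.elim _ _⟩
  | n + 1, N => by
    let ρ : N →ₗ[A] A := proj 0 ∘ₗ N.subtype
    let τ : ker ρ →ₗ[A] Fin n → A :=
      pi (fun i => proj i.succ) ∘ₗ N.subtype ∘ₗ (ker ρ).subtype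
    have hτ : Function.Injective τ := by
      intro x y hxy
      refine Subtype.ext (Subtype.ext (funext fun i => Fin.cases ?_ (fun i => ?_) i))
      · exact (x.2.trans y.2.symm : _)
      · exact congrFun hxy i
    have := projective_of_submodule_pi hered n (range τ)
    have := hered (range ρ)
    have := Module.Projective.of_equiv' (LinearEquiv.ofInjective τ hτ).symm
    exact Module.Projective.of_ker_of_range ρ

theorem ext1Zero.exists_leftInverse {X Y : ModuleCat.{0} A} (h : ext1Zero Y X)
    {E : Type} [AddCommGroup E] [Module A E] {i : X →ₗ[A] E} {pr : E →ₗ[A] Y}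
    (hi : Function.Injective i) (hpr : Function.Surjective pr) (hexact : Function.Exact i pr) :
    ∃ r : E →ₗ[A] X, r ∘ₗ i = LinearMap.id := by
  obtain ⟨r, hr⟩ := h (ModuleCat.of A E) (ModuleCat.ofHom i) (ModuleCat.ofHom pr)
    (ModuleCat.hom_ext hexact.linearMap_comp_eq_zero)
    (ModuleCat.shortComplex_shortExact _ hexact hi hpr)
  exact ⟨r.hom, congrArg ModuleCat.Hom.hom hr⟩

theorem ext1Zero.exists_extend {X Y : ModuleCat.{0} A} (h : ext1Zero Y X)
    {F : Type} [AddCommGroup F] [Module A F] {π : F →ₗ[A] Y} (hπ : Function.Surjective π)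
    (g : ker π →ₗ[A] X) : ∃ k : F →ₗ[A] X, k ∘ₗ (ker π).subtype = g := by
  -- the pushout of `0 → ker π → F → Y → 0` along `g`
  set N : Submodule A (X × F) := range (g.prod (-(ker π).subtype))
  have hN : N ≤ ker (π ∘ₗ snd A X F) := by
    rintro _ ⟨w, rfl⟩
    simp
  let i : X →ₗ[A] (X × F) ⧸ N := N.mkQ ∘ₗ inl A X F
  let pr : (X × F) ⧸ N →ₗ[A] Y := N.liftQ (π ∘ₗ snd A X F) hN
  have hi : Function.Injective i := by
    rw [← ker_eq_bot, eq_bot_iff]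
    rintro x hx
    obtain ⟨w, hw⟩ : (x, (0 : F)) ∈ N := by simpa [i] using hx
    obtain ⟨hwx, hw0⟩ := Prod.ext_iff.mp hw
    obtain rfl : w = 0 := Subtype.ext (by simpa using hw0)
    simpa using hwx.symm
  have hpr : Function.Surjective pr := by
    intro y
    obtain ⟨z, rfl⟩ := hπ y
    exact ⟨N.mkQ (0, z), rfl⟩
  have hexact : Function.Exact i pr := by
    refine Function.Exact.of_comp_of_mem_range (by ext; simp [i, pr]) ?_
    intro e he
    obtain ⟨⟨x, z⟩, rfl⟩ := N.mkQ_surjective e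
    have hz : z ∈ ker π := he
    exact ⟨x + g ⟨z, hz⟩, (Submodule.Quotient.eq N).mpr ⟨⟨z, hz⟩, by ext <;> simp⟩⟩
  obtain ⟨r, hr⟩ := h.exists_leftInverse hi hpr hexact
  refine ⟨r ∘ₗ N.mkQ ∘ₗ inr A X F, ?_⟩
  ext w
  have hw : N.mkQ (0, (w : F)) = i (g w) := (Submodule.Quotient.eq N).mpr ⟨-w, by ext <;> simp⟩
  simpa [hw] using LinearMap.congr_fun hr (g w)

theorem Indec.nontrivial {M : ModuleCat.{0} A} (hM : Indec M) : Nontrivial M :=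
  not_subsingleton_iff_nontrivial.mp fun _ => hM.1 (ModuleCat.isZero_of_subsingleton M)

theorem Indec.eq_bot_or_eq_bot_of_isCompl {M : ModuleCat.{0} A} (hM : Indec M)
    {N₁ N₂ : Submodule A M} (h : IsCompl N₁ N₂) : N₁ = ⊥ ∨ N₂ = ⊥ := by
  have e : M ≅ ModuleCat.of A N₁ ⊞ ModuleCat.of A N₂ :=
    (Submodule.prodEquivOfIsCompl N₁ N₂ h).symm.toModuleIso ≪≫
      (ModuleCat.biprodIsoProd (.of A N₁) (.of A N₂)).symm
  simpa only [ModuleCat.isZero_of_iff_subsingleton, Submodule.subsingleton_iff_eq_bot]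
    using hM.2 _ _ ⟨e⟩

theorem Indec.eq_zero_or_eq_one_of_isIdempotentElem {M : ModuleCat.{0} A} (hM : Indec M)
    {e : Module.End A M} (he : IsIdempotentElem e) : e = 0 ∨ e = 1 := by
  refine (hM.eq_bot_or_eq_bot_of_isCompl he.isCompl).imp range_eq_bot.mp fun hker => ?_
  ext x
  exact ker_eq_bot.mp hker (LinearMap.congr_fun he x)

theorem Indec.isNilpotent_or_bijective {M : ModuleCat.{0} A} (hM : Indec M) [IsArtinian A M]
    [IsNoetherian A M] (φ : Module.End A M) : IsNilpotent φ ∨ Function.Bijective φ := by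
  obtain ⟨n, hn, hcompl⟩ :=
    ((Filter.eventually_ge_atTop 1).and φ.eventually_isCompl_ker_pow_range_pow).exists
  refine (hM.eq_bot_or_eq_bot_of_isCompl hcompl).symm.imp (fun h => ⟨n, range_eq_bot.mp h⟩)
    fun h => ?_
  have hunit : IsUnit (φ ^ n) := (Module.End.isUnit_iff _).mpr
    (IsArtinian.bijective_of_injective_endomorphism _ (ker_eq_bot.mp h))
  exact (Module.End.isUnit_iff φ).mp ((isUnit_pow_iff (by omega)).mp hunit)

theorem Indec.injective_or_eq_zero_of_bijective_comp {X : ModuleCat.{0} A} (hX : Indec X)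
    {Z : Type} [AddCommGroup Z] [Module A Z] {p : X →ₗ[A] Z} {j : Z →ₗ[A] X}
    (h : Function.Bijective (p ∘ₗ j)) : Function.Injective p ∨ p = 0 := by
  let u := LinearEquiv.ofBijective _ h
  let e : Module.End A X := j ∘ₗ u.symm.toLinearMap ∘ₗ p
  have hpe (x : X) : p (e x) = p x := u.apply_symm_apply (p x)
  have he : IsIdempotentElem e := by
    ext x
    exact congrArg (j ∘ₗ u.symm.toLinearMap) (hpe x)
  rcases hX.eq_zero_or_eq_one_of_isIdempotentElem he with he0 | he1
  · right
    ext x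
    rw [← hpe, he0, LinearMap.zero_apply, map_zero, LinearMap.zero_apply]
  · left
    intro x y hxy
    have hexy : e x = e y := congrArg (j ∘ₗ u.symm.toLinearMap) hxy
    rwa [he1] at hexy

/- With `π : Aⁿ ↠ Y`, heredity makes `Ω₀ = π⁻¹(f X)` projective, so `π|Ω₀` lifts through
`X ↠ f X` to some `h'`; `Ext¹(Y, X) = 0` extends `h'|ker π` to `k : Aⁿ → X`, and `s`, `j`
are induced by `π - f ∘ k` and `h' - k`. -/
theorem ext1Zero.exists_endo_restrict_factors (hered : ∀ J : Ideal A, Module.Projective A J)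
    {X Y : ModuleCat.{0} A} [Module.Finite A Y] (h : ext1Zero Y X) (f : X →ₗ[A] Y) :
    ∃ (s : Module.End A Y) (j : range f →ₗ[A] X),
      (∀ y, y - s y ∈ range f) ∧ ∀ t : range f, f (j t) = s t := by
  obtain ⟨n, π, hπ⟩ := Module.Finite.exists_fin' A Y
  let Ω₀ := (range f).comap π
  have := projective_of_submodule_pi hered n Ω₀
  let πI : Ω₀ →ₗ[A] range f := π.restrict fun _ hz => hz
  have hπI : Function.Surjective πI := by
    rintro ⟨_, x, rfl⟩
    obtain ⟨z, hz⟩ := hπ (f x)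
    exact ⟨⟨z, ⟨x, hz.symm⟩⟩, Subtype.ext hz⟩
  obtain ⟨h', hh'⟩ := Module.projective_lifting_property f.rangeRestrict πI
    f.surjective_rangeRestrict
  have hfh' (w : Ω₀) : f (h' w) = π w := congrArg Subtype.val (LinearMap.congr_fun hh' w)
  have hker : ker π ≤ Ω₀ := fun z hz => ⟨0, by simpa using (mem_ker.mp hz).symm⟩
  obtain ⟨k, hk⟩ := h.exists_extend hπ (h' ∘ₗ Submodule.inclusion hker)
  have hkh' (z : Fin n → A) (hz : z ∈ ker π) : k z = h' ⟨z, hker hz⟩ :=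
    LinearMap.congr_fun hk ⟨z, hz⟩
  obtain ⟨s, hs⟩ := π.exists_comp_eq_of_ker_le hπ (φ := π - f ∘ₗ k) fun z hz => by
    simp [hkh' z hz, hfh', mem_ker.mp hz]
  obtain ⟨j, hj⟩ := πI.exists_comp_eq_of_ker_le hπI (φ := h' - k ∘ₗ Ω₀.subtype)
    fun w hw => by
      have hπw : π w = 0 := congrArg Subtype.val (mem_ker.mp hw)
      simp [hkh' w hπw]
  refine ⟨s, j, fun y => ?_, fun t => ?_⟩
  · obtain ⟨z, rfl⟩ := hπ y
    rw [← LinearMap.comp_apply, hs]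
    simp
  · obtain ⟨w, rfl⟩ := hπI t
    calc f (j (πI w)) = f (h' w - k w) := congrArg f (LinearMap.congr_fun hj w)
      _ = π w - f (k w) := by rw [map_sub, hfh']
      _ = s (π w) := (LinearMap.congr_fun hs w).symm

theorem injective_or_surjective_of_ext1Zero (hered : ∀ J : Ideal A, Module.Projective A J)
    {X Y : ModuleCat.{0} A} (hX : Indec X) (hY : Indec Y) [IsArtinian A Y] [IsNoetherian A Y]
    (h : ext1Zero Y X) {f : X →ₗ[A] Y} (hf : f ≠ 0) :
    Function.Injective f ∨ Function.Surjective f := by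
  obtain ⟨s, j, hs, hsj⟩ := h.exists_endo_restrict_factors hered f
  rcases hY.isNilpotent_or_bijective s with ⟨m, hm⟩ | hbij
  · right
    have hpow (m : ℕ) (y : Y) : y - (s ^ m) y ∈ range f := by
      induction m with
      | zero => simp
      | succ m ih => simpa [pow_succ'] using add_mem ih (hs ((s ^ m) y))
    intro y
    simpa [hm] using hpow m y
  · left
    have hinj : Function.Injective (f.rangeRestrict ∘ₗ j) := fun t t' htt' =>
      Subtype.ext <| hbij.1 <| by rw [← hsj, ← hsj]; exact congrArg Subtype.val htt'
    rcases hX.injective_or_eq_zero_of_bijective_comp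
      (IsArtinian.bijective_of_injective_endomorphism _ hinj) with hp | hp
    · exact fun x y hxy => hp (Subtype.ext hxy)
    · exact absurd (by ext x; exact congrArg Subtype.val (LinearMap.congr_fun hp x)) hf

theorem Indec.bijective_of_ext1Zero (hered : ∀ J : Ideal A, Module.Projective A J)
    {M : ModuleCat.{0} A} (hM : Indec M) [IsArtinian A M] [IsNoetherian A M]
    (h : ext1Zero M M) {φ : Module.End A M} (hφ : φ ≠ 0) : Function.Bijective φ :=
  (injective_or_surjective_of_ext1Zero hered hM hM h hφ).elim
    (IsArtinian.bijective_of_injective_endomorphism φ)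
    (IsNoetherian.bijective_of_surjective_endomorphism φ)

theorem indec_of_algEquiv (K : Type) [Field K] [Algebra K A]
    {M : ModuleCat.{0} A} (e : End M ≃ₐ[K] K) : Indec M := by
  refine ⟨fun hz => one_ne_zero (e.symm.injective (by simpa using hz.eq_of_src (𝟙 M) 0)), ?_⟩
  rintro N₁ N₂ ⟨i⟩
  let e₁ : End M := i.hom ≫ biprod.fst ≫ biprod.inl ≫ i.inv
  let e₂ : End M := i.hom ≫ biprod.snd ≫ biprod.inr ≫ i.inv
  have he : e e₂ * e e₁ = 0 := by
    rw [← map_mul, End.mul_def]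
    simp [e₁, e₂]
  have hN₁ (h : e₁ = 0) : IsZero N₁ := by
    rw [IsZero.iff_id_eq_zero]
    simpa [e₁] using congrArg (fun φ => biprod.inl ≫ i.inv ≫ φ ≫ i.hom ≫ biprod.fst) h
  have hN₂ (h : e₂ = 0) : IsZero N₂ := by
    rw [IsZero.iff_id_eq_zero]
    simpa [e₂] using congrArg (fun φ => biprod.inr ≫ i.inv ≫ φ ≫ i.hom ≫ biprod.snd) h
  rcases mul_eq_zero.mp he with h | h
  · exact .inr (hN₂ (by simpa using congrArg e.symm h))
  · exact .inl (hN₁ (by simpa using congrArg e.symm h))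

end

section

variable {A : Type} [Ring A]

attribute [local instance] ModuleCat.moduleOfAlgebraModule
  ModuleCat.isScalarTower_of_algebra_moduleCat

theorem nonempty_algEquiv_of_bijective (K : Type) [Field K] [IsAlgClosed K] [Algebra K A]
    {M : ModuleCat.{0} A} [FiniteDimensional K M] [Nontrivial M]
    (h : ∀ φ : End M, φ ≠ 0 → Function.Bijective φ.hom) :
    Nonempty (End M ≃ₐ[K] K) := by
  have hsurj : Function.Surjective (algebraMap K (End M)) := by
    intro φ
    obtain ⟨c, hc⟩ := Module.End.exists_eigenvalue (φ.hom.restrictScalars K)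
    obtain ⟨v, hv⟩ := hc.exists_hasEigenvector
    refine ⟨c, (sub_eq_zero.mp (not_not.mp fun hne => hv.2 ((h _ hne).1 ?_))).symm⟩
    rw [map_zero]
    change φ.hom v - c • v = 0
    rw [show φ.hom v = c • v from hv.apply_eq_smul, sub_self]
  obtain ⟨x, hx⟩ := exists_ne (0 : M)
  have : Nontrivial (End M) :=
    nontrivial_of_ne (𝟙 M) 0 fun h => hx (congrArg (fun φ : End M => φ.hom x) h)
  exact ⟨(AlgEquiv.ofBijective (Algebra.ofId K (End M))
    ⟨(algebraMap K (End M)).injective, hsurj⟩).symm⟩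

theorem Indec.nonempty_algEquiv_of_ext1Zero (K : Type) [Field K] [IsAlgClosed K] [Algebra K A]
    [FiniteDimensional K A] (hered : ∀ J : Ideal A, Module.Projective A J)
    {M : ModuleCat.{0} A} [Module.Finite A M] (hM : Indec M) (h : ext1Zero M M) :
    Nonempty (End M ≃ₐ[K] K) := by
  have : Module.Finite K M := Module.Finite.trans A M
  have : IsArtinian A M := isArtinian_of_tower K inferInstance
  have : IsNoetherian A M := isNoetherian_of_tower K inferInstance
  have := hM.nontrivial
  exact nonempty_algEquiv_of_bijective K fun φ hφ =>
    hM.bijective_of_ext1Zero hered h fun h0 => hφ (ModuleCat.hom_ext (by simpa using h0))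

end

/-- Over a finite-dimensional hereditary algebra `A` over an
algebraically closed field `K`, a sequence `(X_1, …, X_t)` of (finitely
generated) `A`-modules is an exceptional sequence if and only if the completely
ordered set `{X_1, …, X_t}` is a stratifying system over `A`. -/
theorem exceptionalSeq_iff_stratifyingSystem
    (K : Type) [Field K] [IsAlgClosed K] (A : Type) [Ring A] [Algebra K A]
    [FiniteDimensional K A] (hereditary : ∀ J : Ideal A, Module.Projective A J)
    (L : List (ModuleCat.{0} A)) (hfg : ∀ M ∈ L, Module.Finite A M) :
    IsExceptionalSeq K L ↔ IsStratifyingSystem L := by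
  refine ⟨fun ⟨hexc, hhom, hext⟩ => ⟨fun M hM => (hexc M hM).1.elim (indec_of_algEquiv K),
    fun i j hij => hhom j i hij, fun i j hij => hext j i hij⟩,
    fun ⟨hind, hhom, hext⟩ => ⟨fun M hM => ?_, fun i j hij => hhom j i hij,
    fun i j hij => hext j i hij⟩⟩
  obtain ⟨i, rfl⟩ := List.mem_iff_get.mp hM
  have := hfg _ hM
  have hself := hext i i le_rfl
  exact ⟨(hind _ hM).nonempty_algEquiv_of_ext1Zero K hereditary hself, hself⟩
end

section
/- Let A = KÃ_{p,q} with 1 < p ≤ q. Then the sets F = {F_1, ..., F_{p-1}} and G = {G_1, ..., G_{q-1}}, each with the indicated order, are stratifying systems over A. -/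
open CategoryTheory CategoryTheory.Limits

/-!
The modules `F_i` and `G_j` are simple modules at consecutive vertices of one branch of `Ã_{p,q}`,
listed in the direction of its arrows. Distinct simples admit no nonzero maps (Schur), and
`Ext¹(S_a, S_b) ≠ 0` only along an arrow `a → b`, which goes from a member of the list to the
next one, never backwards.
-/

section Simple

variable {A : Type} [Ring A]

theorem indec_of_simple (M : ModuleCat.{0} A) [Simple M] : Indec M :=
  ⟨(indecomposable_of_simple M).1, fun N₁ N₂ ⟨e⟩ => (indecomposable_of_simple M).2 N₁ N₂ e⟩

theorem homZero_of_simple_of_isEmpty_iso (X Y : ModuleCat.{0} A) [Simple X] [Simple Y]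
    [IsEmpty (X ≅ Y)] : homZero X Y := by
  intro f
  by_contra hf
  have := isIso_of_hom_simple hf
  exact IsEmpty.false (asIso f)

theorem IsStratifyingSystem.of_simple (L : List (ModuleCat.{0} A))
    (hsimple : ∀ M ∈ L, Simple M)
    (hiso : ∀ i j : Fin L.length, i < j → IsEmpty (L.get j ≅ L.get i))
    (hext : ∀ i j : Fin L.length, i ≤ j → ext1Zero (L.get j) (L.get i)) :
    IsStratifyingSystem L := by
  refine ⟨fun M hM => have := hsimple M hM; indec_of_simple M, fun i j hij => ?_, hext⟩
  have := hsimple _ (L.get_mem i)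
  have := hsimple _ (L.get_mem j)
  have := hiso i j hij
  exact homZero_of_simple_of_isEmpty_iso _ _

end Simple

namespace APQAlgebra

variable {K : Type} [Field K] {p q : ℕ}

theorem isStratifyingSystem_map_S (T : APQAlgebra K p q) {n : ℕ} {g : ℕ → ℕ}
    (hlt : ∀ i < n, g i < p + q) (hinj : Set.InjOn g (Set.Iio n))
    (hnoarrow : ∀ i j, i ≤ j → j < n → ¬ apqArrow p q (g j) (g i)) :
    IsStratifyingSystem ((List.range n).map fun i => T.S (g i)) := by
  set L := (List.range n).map fun i => T.S (g i)
  have hget (i : Fin L.length) : i.val < n ∧ L.get i = T.S (g i) :=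
    ⟨by simpa [L] using i.isLt, by simp [L]⟩
  refine IsStratifyingSystem.of_simple L ?_ (fun i j hij => ?_) (fun i j hij => ?_)
  · simp only [L, List.mem_map, List.mem_range]
    rintro M ⟨i, hi, rfl⟩
    exact (simple_iff_isSimpleModule' _).mpr (T.S_simple _ (hlt i hi))
  · obtain ⟨hi, hLi⟩ := hget i
    obtain ⟨hj, hLj⟩ := hget j
    rw [hLi, hLj]
    refine ⟨fun e => hij.ne' (Fin.ext (hinj hj hi ?_))⟩
    exact T.S_pairwise_noniso _ (hlt _ hj) _ (hlt _ hi) ⟨e⟩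
  · obtain ⟨hi, hLi⟩ := hget i
    obtain ⟨hj, hLj⟩ := hget j
    rw [hLi, hLj]
    by_contra h
    exact hnoarrow i j hij hj ((T.ext_simples _ (hlt _ hj) _ (hlt _ hi)).mp h)

end APQAlgebra

theorem Flist_Glist_stratifyingSystem_general
    (K : Type) [Field K] (p q : ℕ) (hp : 1 < p) (hpq : p ≤ q)
    (T : APQAlgebra K p q) :
    IsStratifyingSystem T.Flist ∧ IsStratifyingSystem T.Glist := by
  constructor
  · refine T.isStratifyingSystem_map_S (fun i hi => by omega) (fun i hi j hj h => ?_)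
      (fun i j hij hj => by unfold apqArrow; omega)
    simp only [Set.mem_Iio] at hi hj
    omega
  · refine T.isStratifyingSystem_map_S (fun j hj => by omega) (fun i hi j hj h => ?_)
      (fun i j hij hj => by unfold apqArrow; omega)
    simp only [Set.mem_Iio] at hi hj
    omega

/-- Let `A = KÃ_{p,q}` with `1 < p ≤ q`.  Then the ordered sets
`F = (F_1, …, F_{p-1})` and `G = (G_1, …, G_{q-1})` are stratifying systems
over `A`. -/
theorem Flist_Glist_stratifyingSystem
    (K : Type) [Field K] [IsAlgClosed K] (p q : ℕ) (hp : 1 < p) (hpq : p ≤ q)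
    (T : APQAlgebra K p q) :
    IsStratifyingSystem T.Flist ∧ IsStratifyingSystem T.Glist :=
  Flist_Glist_stratifyingSystem_general K p q hp hpq T
end

section
/- Let A be a finite-dimensional hereditary K-algebra. If I_j and I_m are indecomposable injective A-modules, then Ext^1_A(τ^t I_j, τ^{t-r} I_m) = 0 for all natural numbers t ≥ r ≥ 0. -/
open CategoryTheory CategoryTheory.Limits

/-!
Induct on `t - r`; the base case is the injectivity of `I_m`. For the step, put
`X = τ^(t-1) I_j` and `Z = τ^(t-r-1) I_m`, so that `Ext¹(X, Z) = 0`; we may assume both are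
indecomposable and non-projective, since otherwise `τX` or `τZ` vanishes. Comparing a non-split
extension of `τX` by `τZ` with the almost split sequence starting at `τZ` produces a nonzero map
`f : Z ⟶ τX`. Over a hereditary ring `Ext¹(X, -)` is right exact (by Kaplansky's theorem that
submodules of free modules are projective), so `Ext¹(X, im f) = 0`. As `τX ⟶ τX / im f` is not a
split monomorphism, the almost split sequence ending in `X` splits after pushing out along it,
hence comes from `Ext¹(X, im f) = 0` and splits itself: a contradiction.
-/

universe u

section Kaplansky

variable {A : Type*} [Ring A] {M N : Type*} [AddCommGroup M] [Module A M]
  [AddCommGroup N] [Module A N]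

-- `W / ker ℓ` is isomorphic to an ideal, hence projective, so `ker ℓ` is a direct summand of `W`.
lemma exists_lift_extending_ker (hered : ∀ J : Ideal A, Module.Projective A J)
    {W : Type*} [AddCommGroup W] [Module A W] (ℓ : W →ₗ[A] A)
    {e : M →ₗ[A] N} (he : Function.Surjective e) (d : W →ₗ[A] N)
    (φ : LinearMap.ker ℓ →ₗ[A] M) (hφ : e ∘ₗ φ = d ∘ₗ (LinearMap.ker ℓ).subtype) :
    ∃ φ₁ : W →ₗ[A] M, e ∘ₗ φ₁ = d ∧ φ₁ ∘ₗ (LinearMap.ker ℓ).subtype = φ := by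
  have := hered (LinearMap.range ℓ)
  obtain ⟨ρ, hρ⟩ := Module.projective_lifting_property ℓ.rangeRestrict LinearMap.id
    ℓ.surjective_rangeRestrict
  obtain ⟨t, ht⟩ := Module.projective_lifting_property e (d ∘ₗ ρ) he
  have hρ' : ∀ j, ℓ (ρ j) = j := fun j => congrArg Subtype.val (LinearMap.congr_fun hρ j)
  let ψ : W →ₗ[A] LinearMap.ker ℓ :=
    LinearMap.codRestrict _ (LinearMap.id - ρ ∘ₗ ℓ.rangeRestrict) fun w => by simp [hρ']
  refine ⟨φ ∘ₗ ψ + t ∘ₗ ℓ.rangeRestrict, ?_, ?_⟩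
  · ext w
    have h1 := LinearMap.congr_fun hφ (ψ w)
    have h2 := LinearMap.congr_fun ht (ℓ.rangeRestrict w)
    simp only [LinearMap.comp_apply, Submodule.subtype_apply] at h1 h2
    simp [h1, h2, ψ]
  · ext ⟨w, hw⟩
    have h0 : ℓ.rangeRestrict w = 0 := Subtype.ext hw
    have hψ : ψ w = ⟨w, hw⟩ := Subtype.ext (by simp [ψ, h0])
    simp [hψ, h0]

variable {X : Type*} (Ω : Submodule A (X →₀ A))

def partialLifts (e : M →ₗ[A] N) (d : Ω →ₗ[A] N) : Set (Set X × ((X →₀ A) →ₗ.[A] M)) :=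
  {P | P.2.domain = Ω ⊓ Finsupp.supported A A P.1 ∧
    ∀ (x : X →₀ A) (hx : x ∈ P.2.domain) (hΩ : x ∈ Ω), e (P.2 ⟨x, hx⟩) = d ⟨x, hΩ⟩}

lemma empty_mem_partialLifts (e : M →ₗ[A] N) (d : Ω →ₗ[A] N) :
    ((∅ : Set X), ⟨Ω ⊓ Finsupp.supported A A ∅, 0⟩) ∈ partialLifts Ω e d := by
  refine ⟨rfl, fun x hx hΩ => ?_⟩
  obtain rfl : x = 0 := by simpa using (Submodule.mem_inf.1 hx).2
  simp [show (⟨0, hΩ⟩ : Ω) = 0 from rfl]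

lemma exists_upperBound_partialLifts {e : M →ₗ[A] N} {d : Ω →ₗ[A] N}
    {c : Set (Set X × ((X →₀ A) →ₗ.[A] M))} (hcS : c ⊆ partialLifts Ω e d)
    (hc : IsChain (· ≤ ·) c) (hne : c.Nonempty) :
    ∃ ub ∈ partialLifts Ω e d, ∀ P ∈ c, P ≤ ub := by
  have hdir : DirectedOn (· ≤ ·) (Prod.snd '' c) :=
    (hc.image_of_map_rel _ _ _ fun _ _ h => h.2).directedOn
  have hmem : ∀ y, y ∈ (LinearPMap.sSup _ hdir).domain ↔ ∃ P ∈ c, y ∈ P.2.domain := by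
    intro y
    rw [LinearPMap.mem_domain_sSup_iff (hne.image _) hdir]
    exact ⟨fun ⟨_, ⟨P, hP, rfl⟩, hy⟩ => ⟨P, hP, hy⟩, fun ⟨P, hP, hy⟩ => ⟨_, ⟨P, hP, rfl⟩, hy⟩⟩
  refine ⟨(⋃ P ∈ c, P.1, LinearPMap.sSup _ hdir), ⟨?_, ?_⟩,
    fun P hP => ⟨Set.subset_biUnion_of_mem hP, LinearPMap.le_sSup hdir ⟨P, hP, rfl⟩⟩⟩
  · ext y
    rw [hmem, Submodule.mem_inf, Finsupp.mem_supported]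
    constructor
    · rintro ⟨P, hP, hy⟩
      rw [(hcS hP).1, Submodule.mem_inf, Finsupp.mem_supported] at hy
      exact ⟨hy.1, hy.2.trans (Set.subset_biUnion_of_mem hP)⟩
    · rintro ⟨hyΩ, hy⟩
      obtain ⟨P, hP, hyP⟩ := DirectedOn.exists_mem_subset_of_finset_subset_biUnion hne
        (hc.directedOn.mono fun _ _ h => h.1) hy
      exact ⟨P, hP, (hcS hP).1 ▸ Submodule.mem_inf.2 ⟨hyΩ, hyP⟩⟩
  · intro y hy hyΩ
    obtain ⟨P, hP, hyP⟩ := (hmem y).1 hy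
    rw [← (hcS hP).2 y hyP hyΩ, ← LinearPMap.sSup_apply hdir ⟨P, hP, rfl⟩ ⟨y, hyP⟩]

lemma exists_partialLift_insert (hered : ∀ J : Ideal A, Module.Projective A J)
    {e : M →ₗ[A] N} (he : Function.Surjective e) {d : Ω →ₗ[A] N}
    {P : Set X × ((X →₀ A) →ₗ.[A] M)} (hP : P ∈ partialLifts Ω e d) {x : X} (hx : x ∉ P.1) :
    ∃ P' ∈ partialLifts Ω e d, P ≤ P' ∧ x ∈ P'.1 := by
  let Ω₁ := Ω ⊓ Finsupp.supported A A (insert x P.1)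
  have hΩ₁ : Ω₁ ≤ Ω := inf_le_left
  let ℓ : Ω₁ →ₗ[A] A := Finsupp.lapply x ∘ₗ Ω₁.subtype
  have hker : ∀ ω : Ω₁, ω ∈ LinearMap.ker ℓ ↔ (ω : X →₀ A) ∈ P.2.domain := by
    rintro ⟨ω, hω₁⟩
    obtain ⟨hωΩ, hω⟩ := Submodule.mem_inf.1 hω₁
    rw [Finsupp.mem_supported] at hω
    rw [hP.1, LinearMap.mem_ker, Submodule.mem_inf, Finsupp.mem_supported]
    change ω x = 0 ↔ _
    refine ⟨fun h0 => ⟨hωΩ, fun z hz => ?_⟩, fun h => Finsupp.notMem_support_iff.1 (hx <| h.2 ·)⟩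
    exact (hω hz).resolve_left fun hzx => Finsupp.mem_support_iff.1 hz (hzx ▸ h0)
  let φ : LinearMap.ker ℓ →ₗ[A] M := P.2.toFun ∘ₗ
    LinearMap.codRestrict P.2.domain (Ω₁.subtype ∘ₗ (LinearMap.ker ℓ).subtype)
      fun ω => (hker _).1 ω.2
  obtain ⟨φ₁, he₁, hφ₁⟩ := exists_lift_extending_ker (W := Ω₁) (e := e) hered ℓ he
    (d ∘ₗ Submodule.inclusion hΩ₁) φ (by ext ω; exact hP.2 _ ((hker _).1 ω.2) (hΩ₁ (ω : Ω₁).2))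
  refine ⟨(insert x P.1, ⟨Ω₁, φ₁⟩), ⟨rfl, fun y hy _ => LinearMap.congr_fun he₁ ⟨y, hy⟩⟩,
    ⟨Set.subset_insert _ _, ?_, fun a b hab => ?_⟩, Set.mem_insert _ _⟩
  · rw [hP.1]
    exact inf_le_inf_left _ (Finsupp.supported_mono (Set.subset_insert _ _))
  · have hb : b ∈ LinearMap.ker ℓ := (hker b).2 (hab ▸ a.2)
    have := LinearMap.congr_fun hφ₁ ⟨b, hb⟩
    simp only [LinearMap.comp_apply, Submodule.subtype_apply] at this
    change P.2 a = φ₁ b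
    rw [this]
    exact congrArg P.2 (Subtype.ext hab)

lemma exists_lift_of_hereditary (hered : ∀ J : Ideal A, Module.Projective A J)
    {e : M →ₗ[A] N} (he : Function.Surjective e) (d : Ω →ₗ[A] N) :
    ∃ s : Ω →ₗ[A] M, e ∘ₗ s = d := by
  obtain ⟨m, -, hm⟩ := zorn_le_nonempty₀ (partialLifts Ω e d)
    (fun c hcS hc y hy => exists_upperBound_partialLifts Ω hcS hc ⟨y, hy⟩) _
    (empty_mem_partialLifts Ω e d)
  have huniv : ∀ x, x ∈ m.1 := fun x => by_contra fun hx => by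
    obtain ⟨P', hP', hle, hxP'⟩ := exists_partialLift_insert Ω hered he hm.1 hx
    exact hx ((hm.2 hP' hle).1 hxP')
  have hdom : m.2.domain = Ω := by
    rw [hm.1.1, Set.eq_univ_of_forall huniv, Finsupp.supported_univ, inf_top_eq]
  exact ⟨m.2.toFun ∘ₗ Submodule.inclusion hdom.ge, by ext ω; exact hm.1.2 _ _ ω.2⟩

end Kaplansky

theorem Submodule.projective_of_hereditary {A X : Type u} [Ring A]
    (hered : ∀ J : Ideal A, Module.Projective A J) (Ω : Submodule A (X →₀ A)) :
    Module.Projective A Ω :=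
  Module.Projective.of_lifting_property (P := Ω) fun _ d he =>
    exists_lift_of_hereditary Ω hered he d

section ShortExact

open ShortComplex

variable {C : Type*} [Category C] [Abelian C]

lemma CategoryTheory.ShortComplex.ShortExact.exists_retraction_iff_exists_section
    {S : ShortComplex C} (hS : S.ShortExact) :
    (∃ r : S.X₂ ⟶ S.X₁, S.f ≫ r = 𝟙 _) ↔ ∃ s : S.X₃ ⟶ S.X₂, s ≫ S.g = 𝟙 _ :=
  ⟨fun ⟨r, hr⟩ => ⟨_, (Splitting.ofExactOfRetraction S hS.exact r hr hS.epi_g).s_g⟩,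
    fun ⟨s, hs⟩ => ⟨_, (Splitting.ofExactOfSection S hS.exact s hs hS.mono_f).f_r⟩⟩

lemma CategoryTheory.ShortComplex.ShortExact.pushout {S : ShortComplex C} (hS : S.ShortExact)
    {Y : C} (c : S.X₁ ⟶ Y) :
    (ShortComplex.mk (pushout.inr S.f c)
      (pushout.desc (f := S.f) (g := c) S.g 0 (by rw [S.zero, comp_zero]))
      (pushout.inr_desc _ _ _)).ShortExact := by
  have := hS.epi_g
  have := hS.mono_f
  have : Epi (pushout.desc (f := S.f) (g := c) S.g 0 (by rw [S.zero, comp_zero])) :=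
    epi_of_epi_fac (pushout.inl_desc _ _ _)
  refine ShortExact.mk' (exact_of_g_is_cokernel _ ?_) inferInstance this
  exact CokernelCofork.IsColimit.ofπ _ _
    (fun φ hφ => hS.exact.desc (pushout.inl _ _ ≫ φ)
      (by rw [pushout.condition_assoc, hφ, comp_zero]))
    (fun φ hφ => pushout.hom_ext (by rw [pushout.inl_desc_assoc, hS.exact.g_desc])
      (by rw [pushout.inr_desc_assoc, zero_comp]; exact hφ.symm))
    (fun φ hφ m hm => by rw [← cancel_epi S.g, hS.exact.g_desc, ← hm, pushout.inl_desc_assoc])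

end ShortExact

section Modules

variable {A : Type} [Ring A]

lemma ext1Zero_of_injective {X Y : ModuleCat.{0} A} [Injective Y] : ext1Zero X Y :=
  fun _ i _ _ hS =>
    have := hS.mono_f
    ⟨Injective.factorThru (𝟙 Y) i, Injective.comp_factorThru _ _⟩

lemma ext1Zero_of_isZero_left {X Y : ModuleCat.{0} A} (hX : IsZero X) : ext1Zero X Y :=
  fun _ _ _ _ hS => hS.exists_retraction_iff_exists_section.2 ⟨0, hX.eq_of_src _ _⟩

lemma ext1Zero_of_isZero_right {X Y : ModuleCat.{0} A} (hY : IsZero Y) : ext1Zero X Y :=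
  fun _ _ _ _ _ => ⟨0, hY.eq_of_src _ _⟩

lemma ext1Zero_of_forall_exists_comp_eq {S : ShortComplex (ModuleCat.{0} A)}
    (hS : S.ShortExact) [Projective S.X₂] {Y : ModuleCat.{0} A}
    (h : ∀ c : S.X₁ ⟶ Y, ∃ k : S.X₂ ⟶ Y, S.f ≫ k = c) : ext1Zero S.X₃ Y := by
  intro B i p w hT
  have := hS.epi_g
  have := hT.mono_f
  have := hT.epi_g
  let u : S.X₂ ⟶ B := Projective.factorThru S.g p
  obtain ⟨k, hk⟩ := h (hT.exact.lift (S.f ≫ u) (by simp [u]))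
  let z := hS.exact.desc (u - k ≫ i) (by
    rw [Preadditive.comp_sub, reassoc_of% hk, sub_eq_zero]
    exact (hT.exact.lift_f _ _).symm)
  refine hT.exists_retraction_iff_exists_section.2 ⟨z, ?_⟩
  rw [← cancel_epi S.g]
  simp [z, u, w]

lemma exists_comp_eq_of_ext1Zero {S : ShortComplex (ModuleCat.{0} A)} (hS : S.ShortExact)
    {Y : ModuleCat.{0} A} (h : ext1Zero S.X₃ Y) (c : S.X₁ ⟶ Y) : ∃ k : S.X₂ ⟶ Y, S.f ≫ k = c := by
  obtain ⟨r, hr⟩ := h _ _ _ _ (hS.pushout c)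
  exact ⟨pushout.inl _ _ ≫ r, by rw [pushout.condition_assoc, hr, Category.comp_id]⟩

lemma exists_projective_presentation_of_hereditary
    (hered : ∀ J : Ideal A, Module.Projective A J) (X : ModuleCat.{0} A) :
    ∃ (Ω F : ModuleCat.{0} A) (a : Ω ⟶ F) (b : F ⟶ X) (w : a ≫ b = 0),
      (ShortComplex.mk a b w).ShortExact ∧ Projective Ω ∧ Projective F := by
  let b : ModuleCat.of A (X →₀ A) ⟶ X := ModuleCat.ofHom (Finsupp.linearCombination A id)
  let Ω := LinearMap.ker b.hom
  have : Module.Projective A Ω := Submodule.projective_of_hereditary hered Ω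
  refine ⟨ModuleCat.of A Ω, _, ModuleCat.ofHom Ω.subtype, b, by ext x; exact x.2, ?_,
    (IsProjective.iff_projective _).1 this, ModuleCat.projective_of_free Finsupp.basisSingleOne⟩
  refine ShortComplex.ShortExact.mk' ?_ ?_ ?_
  · exact (ShortComplex.moduleCat_exact_iff_range_eq_ker _).2 (Submodule.range_subtype Ω)
  · exact (ModuleCat.mono_iff_injective _).2 Subtype.val_injective
  · exact (ModuleCat.epi_iff_surjective _).2
      (Finsupp.linearCombination_surjective _ Function.surjective_id)

lemma ext1Zero_of_epi (hered : ∀ J : Ideal A, Module.Projective A J) {X M N : ModuleCat.{0} A}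
    (g : M ⟶ N) [Epi g] (h : ext1Zero X M) : ext1Zero X N := by
  obtain ⟨Ω, F, a, b, w, hS, hΩ, hF⟩ := exists_projective_presentation_of_hereditary hered X
  refine ext1Zero_of_forall_exists_comp_eq hS fun c => ?_
  obtain ⟨k, hk⟩ := exists_comp_eq_of_ext1Zero hS h (Projective.factorThru c g)
  exact ⟨k ≫ g, by rw [← Category.assoc, hk, Projective.factorThru_comp]⟩

-- `0 ⟶ ker q ⟶ ker g ⟶ X ⟶ 0` is exact and the given sequence is its pushout along `ker q ⟶ T`.
lemma exists_section_of_ext1Zero_ker {T E X C : ModuleCat.{0} A} {ι : T ⟶ E} {π : E ⟶ X}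
    {w : ι ≫ π = 0} (hS : (ShortComplex.mk ι π w).ShortExact) {q : T ⟶ C}
    (hq : Function.Surjective q) (g : E ⟶ C) (hg : ι ≫ g = q)
    (h : ext1Zero X (ModuleCat.of A (LinearMap.ker q.hom))) :
    ∃ s : X ⟶ E, s ≫ π = 𝟙 X := by
  have hι : Function.Injective ι := (ModuleCat.mono_iff_injective _).1 hS.mono_f
  have hπ : Function.Surjective π := (ModuleCat.epi_iff_surjective _).1 hS.epi_g
  have hexact := (ShortComplex.moduleCat_exact_iff_range_eq_ker _).1 hS.exact
  have hgι : ∀ t, g (ι t) = q t := fun t => by rw [← hg]; rfl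
  have hπι : ∀ t, π (ι t) = 0 := fun t => by rw [← ModuleCat.comp_apply, w]; rfl
  let i' : ModuleCat.of A (LinearMap.ker q.hom) ⟶ ModuleCat.of A (LinearMap.ker g.hom) :=
    ModuleCat.ofHom (ι.hom.restrict fun t ht => by simpa [hgι] using ht)
  let p' : ModuleCat.of A (LinearMap.ker g.hom) ⟶ X :=
    ModuleCat.ofHom (π.hom ∘ₗ (LinearMap.ker g.hom).subtype)
  have w' : i' ≫ p' = 0 := by ext t; exact hπι t
  have hT : (ShortComplex.mk i' p' w').ShortExact := by
    refine ShortComplex.ShortExact.mk' ?_ ?_ ?_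
    · rw [ShortComplex.moduleCat_exact_iff]
      rintro ⟨e, he⟩ hpe
      obtain ⟨t, rfl⟩ : e ∈ LinearMap.range ι.hom := hexact ▸ hpe
      exact ⟨⟨t, by simpa [hgι] using he⟩, rfl⟩
    · exact (ModuleCat.mono_iff_injective _).2 fun a b hab => Subtype.ext (hι congr(($hab).1))
    · refine (ModuleCat.epi_iff_surjective _).2 fun x => ?_
      obtain ⟨e, rfl⟩ := hπ x
      obtain ⟨t, ht⟩ := hq (g e)
      exact ⟨⟨e - ι t, by simp [hgι, ht]⟩, by simp [p', hπι]⟩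
  obtain ⟨s, hs⟩ := hT.exists_retraction_iff_exists_section.1 (h _ _ _ _ hT)
  exact ⟨s ≫ ModuleCat.ofHom (LinearMap.ker g.hom).subtype, hs⟩

lemma IsAlmostSplitSeq.exists_ne_zero_of_not_split {L E' Z B W : ModuleCat.{0} A}
    {i' : L ⟶ E'} {p' : E' ⟶ Z} (asq : IsAlmostSplitSeq i' p')
    {i : L ⟶ B} {p : B ⟶ W} {w : i ≫ p = 0} (hS : (ShortComplex.mk i p w).ShortExact)
    (hns : ¬ ∃ r : B ⟶ L, i ≫ r = 𝟙 L) : ∃ h : Z ⟶ W, h ≠ 0 := by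
  have := asq.shortExact.epi_g
  have := hS.mono_f
  obtain ⟨g, hg⟩ := asq.desc_of_not_splitMono B i hns
  have hgp' : i' ≫ g ≫ p = 0 := by rw [reassoc_of% hg]; exact w
  refine ⟨asq.shortExact.exact.desc (g ≫ p) hgp', fun h0 => ?_⟩
  have hgp : g ≫ p = 0 := by
    rw [← asq.shortExact.exact.g_desc (g ≫ p) hgp', h0, Limits.comp_zero]
  have hk : i' ≫ hS.exact.lift g hgp = 𝟙 L := by
    rw [← cancel_mono i, Category.assoc, hS.exact.lift_f, hg, Category.id_comp]
  exact asq.not_split (asq.shortExact.exists_retraction_iff_exists_section.1 ⟨_, hk⟩)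

lemma IsAlmostSplitSeq.hom_eq_zero_of_ext1Zero (hered : ∀ J : Ideal A, Module.Projective A J)
    {T E X M : ModuleCat.{0} A} {ι : T ⟶ E} {π : E ⟶ X} (asq : IsAlmostSplitSeq ι π)
    (h : ext1Zero X M) (f : M ⟶ T) : f = 0 := by
  by_contra hf
  let q : T ⟶ ModuleCat.of A (T ⧸ LinearMap.range f.hom) :=
    ModuleCat.ofHom (LinearMap.range f.hom).mkQ
  have hfq : f ≫ q = 0 := by
    ext m
    exact (Submodule.Quotient.mk_eq_zero _).2 ⟨m, rfl⟩
  have hq : ¬ ∃ r, q ≫ r = 𝟙 T := fun ⟨r, hr⟩ => hf <| by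
    rw [← Category.comp_id f, ← hr, reassoc_of% hfq, Limits.zero_comp]
  obtain ⟨g, hg⟩ := asq.desc_of_not_splitMono _ q hq
  let f' : M ⟶ ModuleCat.of A (LinearMap.ker q.hom) := ModuleCat.ofHom <|
    f.hom.codRestrict _ fun m => (Submodule.Quotient.mk_eq_zero _).2 ⟨m, rfl⟩
  have : Epi f' := (ModuleCat.epi_iff_surjective _).2 fun ⟨t, ht⟩ => by
    obtain ⟨m, rfl⟩ := (Submodule.Quotient.mk_eq_zero _).1 ht
    exact ⟨m, rfl⟩
  exact asq.not_split (exists_section_of_ext1Zero_ker asq.shortExact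
    (Submodule.mkQ_surjective _) g hg (ext1Zero_of_epi hered f' h))

end Modules

namespace ARTranslation

variable {A : Type} [Ring A] (ar : ARTranslation A)

lemma isZero_τ_or_exists_isAlmostSplitSeq {X : ModuleCat.{0} A} (hX : Indec X ∨ IsZero X) :
    IsZero (ar.τ X) ∨
      ∃ (E : ModuleCat.{0} A) (i : ar.τ X ⟶ E) (p : E ⟶ X), IsAlmostSplitSeq i p := by
  by_cases hP : Projective X
  · exact Or.inl (ar.τ_proj X hP)
  · exact Or.inr (ar.τ_almost_split X (hX.resolve_right fun h => hP h.projective) hP)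

lemma indec_or_isZero_τ_iterate {X : ModuleCat.{0} A} (hX : Indec X) (n : ℕ) :
    Indec (ar.τ^[n] X) ∨ IsZero (ar.τ^[n] X) := by
  induction n with
  | zero => exact Or.inl hX
  | succ n ih =>
    rw [Function.iterate_succ_apply']
    rcases ar.isZero_τ_or_exists_isAlmostSplitSeq ih with h | ⟨_, _, _, asq⟩
    · exact Or.inr h
    · exact Or.inl asq.indec_left

lemma ext1Zero_τ (hered : ∀ J : Ideal A, Module.Projective A J) {X Z : ModuleCat.{0} A}
    (hX : Indec X ∨ IsZero X) (hZ : Indec Z ∨ IsZero Z) (h : ext1Zero X Z) :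
    ext1Zero (ar.τ X) (ar.τ Z) := by
  rcases ar.isZero_τ_or_exists_isAlmostSplitSeq hX with hτX | ⟨_, _, _, asqX⟩
  · exact ext1Zero_of_isZero_left hτX
  rcases ar.isZero_τ_or_exists_isAlmostSplitSeq hZ with hτZ | ⟨_, _, _, asqZ⟩
  · exact ext1Zero_of_isZero_right hτZ
  intro B i p w hS
  by_contra hns
  obtain ⟨f, hf⟩ := asqZ.exists_ne_zero_of_not_split hS hns
  exact hf (asqX.hom_eq_zero_of_ext1Zero hered h f)

end ARTranslation

theorem ext_vanish_preinjective_general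
    (A : Type) [Ring A]
    (hereditary : ∀ J : Ideal A, Module.Projective A J)
    (ar : ARTranslation A)
    (Ij Im : ModuleCat.{0} A)
    (hIji : Indec Ij)
    (hIm : CategoryTheory.Injective Im) (hImi : Indec Im)
    (t r : ℕ) (htr : r ≤ t) :
    ext1Zero (ar.τ^[t] Ij) (ar.τ^[t - r] Im) := by
  obtain ⟨s, rfl⟩ : ∃ s, t = s + r := ⟨t - r, by omega⟩
  rw [Nat.add_sub_cancel]
  clear htr
  induction s with
  | zero => exact ext1Zero_of_injective (Y := Im)
  | succ s ih =>
    rw [Nat.add_right_comm, Function.iterate_succ_apply', Function.iterate_succ_apply']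
    exact ar.ext1Zero_τ hereditary (ar.indec_or_isZero_τ_iterate hIji _)
      (ar.indec_or_isZero_τ_iterate hImi _) ih

/-- Let `A` be a finite-dimensional hereditary `K`-algebra.  If
`I_j` and `I_m` are indecomposable injective `A`-modules, then
`Ext¹_A(τ^t I_j, τ^{t-r} I_m) = 0` for all natural numbers `t ≥ r ≥ 0`. -/
theorem ext_vanish_preinjective
    (K : Type) [Field K] [IsAlgClosed K] (A : Type) [Ring A] [Algebra K A]
    [FiniteDimensional K A] (hereditary : ∀ J : Ideal A, Module.Projective A J)
    (ar : ARTranslation A)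
    (Ij Im : ModuleCat.{0} A)
    (hIj : CategoryTheory.Injective Ij) (hIji : Indec Ij)
    (hIm : CategoryTheory.Injective Im) (hImi : Indec Im)
    (t r : ℕ) (htr : r ≤ t) :
    ext1Zero (ar.τ^[t] Ij) (ar.τ^[t - r] Im) :=
  ext_vanish_preinjective_general A hereditary ar Ij Im hIji hIm hImi t r htr
end

section
/- Let B be a finite-dimensional K-algebra and let 0 → L → X ⊕ Y → M → 0 be an almost split sequence in mod B, with left map (f', g')^t (f': L → X, g': L → Y) and right map (f, g) (f: X → M, g: Y → M). Then: (1) if f' is a monomorphism (respectively, an epimorphism), then g is a monomorphism (respectively, an epimorphism); (2) if g' is a monomorphism (respectively, an epimorphism), then f is a monomorphism (respectively, an epimorphism). -/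
open CategoryTheory CategoryTheory.Limits

/-!
Exactness of `0 → L → X ⊞ Y → M → 0` makes the square formed by `f'`, `g'`, `f` and `-g`
bicartesian, and pushouts carry monos and epis across. Concretely: if `y ≫ g = 0`, then
`y ≫ inr` lifts along `(f', g')ᵗ` to some `l` with `l ≫ f' = 0`, so `l = 0` once `f'` is mono.
If `g ≫ m = 0`, then `f' ≫ f ≫ m = -(g' ≫ g ≫ m) = 0`, so `f ≫ m = 0` once `f'` is epi,
whence `(f, g) ≫ m = 0` and `m = 0`. Swapping the summands gives the statements for `g'` and `f`.
-/

namespace CategoryTheory.ShortComplex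

variable {C : Type*} [Category C] [Abelian C] {L X Y M : C}
  {f' : L ⟶ X} {g' : L ⟶ Y} {f : X ⟶ M} {g : Y ⟶ M}
  {w : biprod.lift f' g' ≫ biprod.desc f g = 0}

lemma ShortExact.mono_of_mono_biprod
    (hS : (ShortComplex.mk (biprod.lift f' g') (biprod.desc f g) w).ShortExact)
    [Mono f'] : Mono g := by
  refine Preadditive.mono_of_cancel_zero _ fun y hy => ?_
  have hk : (y ≫ biprod.inr) ≫ biprod.desc f g = 0 := by simpa using hy
  have hl := hS.exact.lift_f _ hk
  have hl_zero : hS.exact.lift _ hk = 0 := by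
    rw [← cancel_mono f', zero_comp]
    simpa using hl =≫ biprod.fst
  simpa [hl_zero] using (hl =≫ biprod.snd).symm

lemma ShortExact.epi_of_epi_biprod
    (hS : (ShortComplex.mk (biprod.lift f' g') (biprod.desc f g) w).ShortExact)
    [Epi f'] : Epi g := by
  have := hS.epi_g
  refine Preadditive.epi_of_cancel_zero _ fun m hm => ?_
  have hw : f' ≫ f = -(g' ≫ g) := eq_neg_of_add_eq_zero_left (by simpa using w)
  have hfm : f ≫ m = 0 := by
    rw [← cancel_epi f', comp_zero, ← Category.assoc, hw, Preadditive.neg_comp, Category.assoc,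
      hm, comp_zero, neg_zero]
  rw [← cancel_epi (biprod.desc f g), comp_zero]
  ext <;> simp [hfm, hm]

lemma ShortExact.biprod_swap
    (hS : (ShortComplex.mk (biprod.lift f' g') (biprod.desc f g) w).ShortExact) :
    (ShortComplex.mk (biprod.lift g' f') (biprod.desc g f)
      (by simpa [add_comm] using w)).ShortExact :=
  ShortComplex.shortExact_of_iso
    (ShortComplex.isoMk (Iso.refl L) (biprod.braiding X Y) (Iso.refl M)
      (by ext <;> simp) (by ext <;> simp)) hS

end CategoryTheory.ShortComplex

theorem almost_split_biprod_mono_epi_general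
    (B : Type) [Ring B]
    (L X Y M : ModuleCat.{0} B)
    (f' : L ⟶ X) (g' : L ⟶ Y) (f : X ⟶ M) (g : Y ⟶ M)
    (h : IsAlmostSplitSeq (CategoryTheory.Limits.biprod.lift f' g')
      (CategoryTheory.Limits.biprod.desc f g)) :
    ((CategoryTheory.Mono f' → CategoryTheory.Mono g) ∧
     (CategoryTheory.Epi f' → CategoryTheory.Epi g)) ∧
    ((CategoryTheory.Mono g' → CategoryTheory.Mono f) ∧
     (CategoryTheory.Epi g' → CategoryTheory.Epi f)) := by
  have hS := h.shortExact
  exact ⟨⟨fun _ => hS.mono_of_mono_biprod, fun _ => hS.epi_of_epi_biprod⟩,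
    ⟨fun _ => hS.biprod_swap.mono_of_mono_biprod, fun _ => hS.biprod_swap.epi_of_epi_biprod⟩⟩

/-- Let `B` be a finite-dimensional `K`-algebra and
`0 → L → X ⊕ Y → M → 0` an almost split sequence in `mod B` with left map
`(f', g')ᵗ` and right map `(f, g)`.  Then (1) if `f'` is a monomorphism
(resp. epimorphism) then `g` is a monomorphism (resp. epimorphism); (2) if `g'`
is a monomorphism (resp. epimorphism) then `f` is a monomorphism
(resp. epimorphism). -/
theorem almost_split_biprod_mono_epi
    (K : Type) [Field K] (B : Type) [Ring B] [Algebra K B] [FiniteDimensional K B]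
    (L X Y M : ModuleCat.{0} B)
    (f' : L ⟶ X) (g' : L ⟶ Y) (f : X ⟶ M) (g : Y ⟶ M)
    (h : IsAlmostSplitSeq (CategoryTheory.Limits.biprod.lift f' g')
      (CategoryTheory.Limits.biprod.desc f g)) :
    ((CategoryTheory.Mono f' → CategoryTheory.Mono g) ∧
     (CategoryTheory.Epi f' → CategoryTheory.Epi g)) ∧
    ((CategoryTheory.Mono g' → CategoryTheory.Mono f) ∧
     (CategoryTheory.Epi g' → CategoryTheory.Epi f)) :=
  almost_split_biprod_mono_epi_general B L X Y M f' g' f g h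
end
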